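/- The group N = ⟨c, b, x, t | cxc⁻¹ = x, ctc⁻¹ = x⁻¹t, cbc⁻¹ = x⁻¹b⟩ contains a subgroup isomorphic to K = ⟨y, α₁, β | yα₁y⁻¹ = βα₁, yβy⁻¹ = β⟩, via the homomorphism φ : K → N with φ(y) = c, φ(α₁) = b, φ(β) = x⁻¹; injectivity follows since the homomorphism ψ : N → K given by ψ(c) = y, ψ(b) = α₁, ψ(x) = β⁻¹, ψ(t) = α₁ satisfies ψ ∘ φ = id. -/
import Mathlib


namespace Stmt16

-- generators of K: 0 ↦ y, 1 ↦ α₁, 2 ↦ β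
private abbrev y : FreeGroup (Fin 3) := FreeGroup.of 0
private abbrev α₁ : FreeGroup (Fin 3) := FreeGroup.of 1
private abbrev β : FreeGroup (Fin 3) := FreeGroup.of 2

/-- Relations of `K = ⟨y, α₁, β | yα₁y⁻¹ = βα₁, yβy⁻¹ = β⟩`. -/
def relsK : Set (FreeGroup (Fin 3)) :=
  {y * α₁ * y⁻¹ * (β * α₁)⁻¹, y * β * y⁻¹ * β⁻¹}

-- generators of N: 0 ↦ c, 1 ↦ b, 2 ↦ x, 3 ↦ t
private abbrev c : FreeGroup (Fin 4) := FreeGroup.of 0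
private abbrev b : FreeGroup (Fin 4) := FreeGroup.of 1
private abbrev x : FreeGroup (Fin 4) := FreeGroup.of 2
private abbrev t : FreeGroup (Fin 4) := FreeGroup.of 3

/-- Relations of `N = ⟨c, b, x, t | cxc⁻¹ = x, ctc⁻¹ = x⁻¹t, cbc⁻¹ = x⁻¹b⟩`. -/
def relsN : Set (FreeGroup (Fin 4)) :=
  {c * x * c⁻¹ * x⁻¹, c * t * c⁻¹ * (x⁻¹ * t)⁻¹, c * b * c⁻¹ * (x⁻¹ * b)⁻¹}

private lemma mk_rel_eq_one {α : Type*} {rels : Set (FreeGroup α)} {r : FreeGroup α}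
    (hr : r ∈ rels) : PresentedGroup.mk rels r = 1 :=
  (QuotientGroup.eq_one_iff r).mpr (Subgroup.subset_normalClosure hr)

private lemma relN1 : (PresentedGroup.of 0 : PresentedGroup relsN) * PresentedGroup.of 2 *
    (PresentedGroup.of 0)⁻¹ * (PresentedGroup.of 2)⁻¹ = 1 := by
  have h := mk_rel_eq_one (rels := relsN) (r := c * x * c⁻¹ * x⁻¹) (by left; rfl)
  simpa [PresentedGroup.of] using h

private lemma relN3 : (PresentedGroup.of 0 : PresentedGroup relsN) * PresentedGroup.of 1 *
    (PresentedGroup.of 0)⁻¹ * ((PresentedGroup.of 2)⁻¹ * PresentedGroup.of 1)⁻¹ = 1 := by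
  have h := mk_rel_eq_one (rels := relsN) (r := c * b * c⁻¹ * (x⁻¹ * b)⁻¹)
    (by right; right; rfl)
  simpa [PresentedGroup.of] using h

private lemma relK1 : (PresentedGroup.of 0 : PresentedGroup relsK) * PresentedGroup.of 1 *
    (PresentedGroup.of 0)⁻¹ * (PresentedGroup.of 2 * PresentedGroup.of 1)⁻¹ = 1 := by
  have h := mk_rel_eq_one (rels := relsK) (r := y * α₁ * y⁻¹ * (β * α₁)⁻¹) (by left; rfl)
  simpa [PresentedGroup.of] using h

private lemma relK2 : (PresentedGroup.of 0 : PresentedGroup relsK) * PresentedGroup.of 2 *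
    (PresentedGroup.of 0)⁻¹ * (PresentedGroup.of 2)⁻¹ = 1 := by
  have h := mk_rel_eq_one (rels := relsK) (r := y * β * y⁻¹ * β⁻¹) (by right; rfl)
  simpa [PresentedGroup.of] using h

private lemma conj_inv {G : Type*} [Group G] {a u : G} (h : a * u * a⁻¹ * u⁻¹ = 1) :
    a * u⁻¹ * a⁻¹ * u = 1 := by
  have h2 : a * u * a⁻¹ = u := mul_inv_eq_one.mp h
  rw [show a * u⁻¹ * a⁻¹ * u = (a * u * a⁻¹)⁻¹ * u by group, h2, inv_mul_cancel]

private def fφ : Fin 3 → PresentedGroup relsN :=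
  ![PresentedGroup.of 0, PresentedGroup.of 1, (PresentedGroup.of 2)⁻¹]

private lemma hφ : ∀ r ∈ relsK, FreeGroup.lift fφ r = 1 := by
  intro r hr
  rcases hr with rfl | rfl
  · simpa [fφ] using relN3
  · simpa [fφ] using conj_inv relN1

private def gψ : Fin 4 → PresentedGroup relsK :=
  ![PresentedGroup.of 0, PresentedGroup.of 1, (PresentedGroup.of 2)⁻¹, PresentedGroup.of 1]

private lemma hψ : ∀ r ∈ relsN, FreeGroup.lift gψ r = 1 := by
  intro r hr
  rcases hr with rfl | rfl | rfl
  · simpa [gψ] using conj_inv relK2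
  · simpa [gψ] using relK1
  · simpa [gψ] using relK1

/-- `N` contains a copy of `K`, via `y ↦ c`, `α₁ ↦ b`, `β ↦ x⁻¹`. -/
theorem K_embeds_in_N :
    ∃ φ : PresentedGroup relsK →* PresentedGroup relsN,
      φ (PresentedGroup.of 0) = PresentedGroup.of 0 ∧
      φ (PresentedGroup.of 1) = PresentedGroup.of 1 ∧
      φ (PresentedGroup.of 2) = (PresentedGroup.of 2)⁻¹ ∧
      Function.Injective φ := by
  refine ⟨PresentedGroup.toGroup hφ, PresentedGroup.toGroup.of hφ,
    PresentedGroup.toGroup.of hφ, PresentedGroup.toGroup.of hφ, ?_⟩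
  have hcomp : (PresentedGroup.toGroup hψ).comp (PresentedGroup.toGroup hφ) =
      MonoidHom.id (PresentedGroup relsK) := by
    ext i
    fin_cases i <;>
      simp [PresentedGroup.toGroup.of, fφ, gψ]
  exact Function.LeftInverse.injective (g := PresentedGroup.toGroup hψ)
    fun a => by rw [← MonoidHom.comp_apply, hcomp, MonoidHom.id_apply]

end Stmt16
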